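/- The number of derangements d_n of {1,...,n} satisfies, for n ≥ 1, the recurrence d_n = Σ_{q=2}^{n} ((n-1)!/(n-q)!) · d_{n-q}, with initial conditions d_0 = 1 and d_1 = 0. -/

import Mathlib

open Finset

theorem numDerangements_succ_eq_sum_range (n : ℕ) :
    numDerangements (n + 1) =
      ∑ k ∈ range n, n.descFactorial (k + 1) * numDerangements (n - (k + 1)) := by
  induction n with
  | zero => rfl
  | succ n ih =>
    -- the term `k = 0` is `(n + 1) * d n`, the others are `n + 1` times the sum for `d (n + 1)`
    have hdesc : ∀ k, (n + 1).descFactorial (k + 1 + 1) = (n + 1) * n.descFactorial (k + 1) :=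
      fun k => Nat.succ_descFactorial_succ n (k + 1)
    rw [sum_range_succ', numDerangements_add_two]
    simp only [hdesc, Nat.add_sub_add_right, mul_assoc, ← mul_sum, ← ih]
    simp [mul_add, add_comm]

/-- The number of derangements satisfies `d_0 = 1`, `d_1 = 0`, and for `n ≥ 1`,
`d_n = Σ_{q=2}^{n} ((n-1)!/(n-q)!) * d_{n-q}`. -/
theorem stmt3 :
    numDerangements 0 = 1 ∧ numDerangements 1 = 0 ∧
    ∀ n : ℕ, 1 ≤ n →
      numDerangements n =
        ∑ q ∈ Finset.Icc 2 n, (n - 1).descFactorial (q - 1) * numDerangements (n - q) := by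
  refine ⟨rfl, rfl, fun n hn => ?_⟩
  obtain ⟨m, rfl⟩ := Nat.exists_eq_add_of_le' hn
  rw [numDerangements_succ_eq_sum_range, ← Ico_add_one_right_eq_Icc, sum_Ico_eq_sum_range]
  refine sum_congr (by simp) fun k _ => ?_
  congr 2 <;> omega
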